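/- Let {B_n}, B be self-adjoint operators on H, with Q_n, Q the orthogonal projections in H ⊕ H onto Gr(B_n), Gr(B). The following are equivalent: (i) B_n → B in the strong resolvent sense; (ii) Gr(B) equals the strong limit Γ_∞^B of {Gr(B_n)}; (iii) Gr(B) ⊆ Γ_∞^B; (iv) Q_n → Q strongly. -/

import Mathlib

open Filter Topology
open scoped InnerProductSpace

/-- The strong limit of a sequence of subspaces of a topological module. -/
def strongLimit {R M : Type*} [Ring R] [AddCommGroup M] [Module R M] [TopologicalSpace M]
    (V : ℕ → Submodule R M) : Set M :=
  {x | ∃ u : ℕ → M, (∀ n, u n ∈ V n) ∧ Tendsto u atTop (𝓝 x)}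

/-- `P` is the orthogonal projection onto the subspace `G` of `H ⊕ H`, with respect to
the direct sum inner product. -/
def IsGraphOrthProj {H : Type*} [NormedAddCommGroup H] [InnerProductSpace ℂ H]
    (G : Submodule ℂ (H × H)) (P : (H × H) →L[ℂ] (H × H)) : Prop :=
  ∀ w : H × H, P w ∈ G ∧ ∀ v ∈ G, ⟪(w - P w).1, v.1⟫_ℂ + ⟪(w - P w).2, v.2⟫_ℂ = 0

/-- `R` is the resolvent `(B + i)⁻¹` of `B`. -/
def IsResolventAtI {H : Type*} [NormedAddCommGroup H] [InnerProductSpace ℂ H]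
    (B : H →ₗ.[ℂ] H) (R : H → H) : Prop :=
  ∀ ψ : H, ∃ h : R ψ ∈ B.domain, B ⟨R ψ, h⟩ + Complex.I • R ψ = ψ

/-!
Everything is read off graphs. For a symmetric `T` and `v ∈ Gr(T)` one has
`‖v.1‖ ≤ ‖v.2 + i v.1‖`, so `(T + i)⁻¹` is a contraction that recovers `v.1` from
`v.2 + i v.1`; this turns approximation of graph points into convergence of resolvents and back.
Self-adjointness of `B` means `Gr(B)` is determined by the symmetry relation
`⟪v.2, x.1⟫ = ⟪v.1, x.2⟫` against all of `Gr(B)`, which passes to strong limits, and that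
`Gr(B)^⊥ = {(-k.2, k.1) | k ∈ Gr(B)}`. Approximating both components of `w = Qw + (w - Qw)` inside
`Gr(B_n)` and using that the `Q_n` are contractions for the `L²` norm gives `Q_n w → Q w`.
-/

open WithLp Complex

namespace LinearPMap.IsFormalAdjoint

variable {H : Type*} [NormedAddCommGroup H] [InnerProductSpace ℂ H] {T : H →ₗ.[ℂ] H}

lemma inner_snd_fst_of_mem_graph (hT : T.IsFormalAdjoint T) {v x : H × H} (hv : v ∈ T.graph)
    (hx : x ∈ T.graph) : ⟪v.2, x.1⟫_ℂ = ⟪v.1, x.2⟫_ℂ := by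
  obtain ⟨v', hv₁, hv₂⟩ := T.mem_graph_iff.mp hv
  obtain ⟨x', hx₁, hx₂⟩ := T.mem_graph_iff.mp hx
  rw [← hv₁, ← hv₂, ← hx₁, ← hx₂]
  exact hT v' x'

lemma norm_fst_le_of_mem_graph (hT : T.IsFormalAdjoint T) {v : H × H} (hv : v ∈ T.graph) :
    ‖v.1‖ ≤ ‖v.2 + I • v.1‖ := by
  have him : (⟪v.2, v.1⟫_ℂ).im = 0 := by
    rw [← conj_eq_iff_im, inner_conj_symm]
    exact (hT.inner_snd_fst_of_mem_graph hv hv).symm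
  have hpyth : ‖v.2 + I • v.1‖ ^ 2 = ‖v.2‖ ^ 2 + ‖v.1‖ ^ 2 := by
    rw [norm_add_sq (𝕜 := ℂ), inner_smul_right, norm_smul, norm_I, one_mul]
    simp [him]
  refine (sq_le_sq₀ (norm_nonneg _) (norm_nonneg _)).mp ?_
  rw [hpyth]
  exact le_add_of_nonneg_left (sq_nonneg _)

end LinearPMap.IsFormalAdjoint

namespace IsResolventAtI

variable {H : Type*} [NormedAddCommGroup H] [InnerProductSpace ℂ H] {T : H →ₗ.[ℂ] H} {R : H → H}

lemma mem_graph (hR : IsResolventAtI T R) (ψ : H) : (R ψ, ψ - I • R ψ) ∈ T.graph := by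
  obtain ⟨hψ, hTψ⟩ := hR ψ
  exact T.mem_graph_iff.mpr ⟨⟨R ψ, hψ⟩, rfl, eq_sub_of_add_eq hTψ⟩

lemma norm_sub_fst_le (hT : T.IsFormalAdjoint T) (hR : IsResolventAtI T R) (ψ : H)
    {v : H × H} (hv : v ∈ T.graph) : ‖R ψ - v.1‖ ≤ ‖ψ - (v.2 + I • v.1)‖ := by
  have hd := hT.norm_fst_le_of_mem_graph (sub_mem (hR.mem_graph ψ) hv)
  have hsnd : ((R ψ, ψ - I • R ψ) - v).2 + I • ((R ψ, ψ - I • R ψ) - v).1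
      = ψ - (v.2 + I • v.1) := by
    simp only [Prod.fst_sub, Prod.snd_sub, smul_sub]
    abel
  rwa [hsnd] at hd

lemma apply_snd_add_I_smul_fst (hT : T.IsFormalAdjoint T) (hR : IsResolventAtI T R)
    {v : H × H} (hv : v ∈ T.graph) : R (v.2 + I • v.1) = v.1 := by
  simpa [sub_eq_zero] using hR.norm_sub_fst_le hT (v.2 + I • v.1) hv

end IsResolventAtI

namespace IsSelfAdjoint

variable {H : Type*} [NormedAddCommGroup H] [InnerProductSpace ℂ H] [CompleteSpace H]
  {T : H →ₗ.[ℂ] H}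

lemma isFormalAdjoint (hT : IsSelfAdjoint T) : T.IsFormalAdjoint T := by
  simpa only [LinearPMap.isSelfAdjoint_def.mp hT] using
    LinearPMap.adjoint_isFormalAdjoint hT.dense_domain

lemma mem_graph_iff (hT : IsSelfAdjoint T) {x : H × H} :
    x ∈ T.graph ↔ ∀ v ∈ T.graph, ⟪v.2, x.1⟫_ℂ = ⟪v.1, x.2⟫_ℂ := by
  conv_lhs =>
    rw [← LinearPMap.isSelfAdjoint_def.mp hT,
      LinearPMap.adjoint_graph_eq_graph_adjoint hT.dense_domain]
  simp only [Submodule.mem_adjoint_iff, sub_eq_zero]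
  exact ⟨fun h v hv => h v.1 v.2 hv, fun h a b hab => h (a, b) hab⟩

lemma mem_graph_of_orthogonal (hT : IsSelfAdjoint T) {p : H × H}
    (hp : ∀ v ∈ T.graph, ⟪p.1, v.1⟫_ℂ + ⟪p.2, v.2⟫_ℂ = 0) : (p.2, -p.1) ∈ T.graph := by
  refine hT.mem_graph_iff.mpr fun v hv => ?_
  have h := congrArg (starRingEnd ℂ) (hp v hv)
  simp only [map_add, inner_conj_symm, map_zero] at h
  rw [inner_neg_right]
  linear_combination h

end IsSelfAdjoint

namespace IsGraphOrthProj

variable {H : Type*} [NormedAddCommGroup H] [InnerProductSpace ℂ H]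
  {G : Submodule ℂ (H × H)} {P : (H × H) →L[ℂ] (H × H)}

lemma eq_of_mem_of_orthogonal (hP : IsGraphOrthProj G P) {w g : H × H} (hg : g ∈ G)
    (hwg : ∀ v ∈ G, ⟪(w - g).1, v.1⟫_ℂ + ⟪(w - g).2, v.2⟫_ℂ = 0) : P w = g := by
  have hd : P w - g ∈ G := sub_mem (hP w).1 hg
  have hsplit : toLp 2 (P w - g) = toLp 2 (w - g) - toLp 2 (w - P w) := by
    rw [← toLp_sub]
    congr 1
    abel
  have hself : ⟪toLp 2 (P w - g), toLp 2 (P w - g)⟫_ℂ = 0 := by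
    have h₁ : ⟪toLp 2 (w - g), toLp 2 (P w - g)⟫_ℂ = 0 := hwg _ hd
    have h₂ : ⟪toLp 2 (w - P w), toLp 2 (P w - g)⟫_ℂ = 0 := (hP w).2 _ hd
    calc _ = ⟪toLp 2 (w - g) - toLp 2 (w - P w), toLp 2 (P w - g)⟫_ℂ := by rw [← hsplit]
      _ = 0 := by rw [inner_sub_left, h₁, h₂, sub_zero]
  simpa [sub_eq_zero] using hself

lemma apply_eq_self (hP : IsGraphOrthProj G P) {w : H × H} (hw : w ∈ G) : P w = w :=
  hP.eq_of_mem_of_orthogonal hw (by simp)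

lemma norm_toLp_apply_le (hP : IsGraphOrthProj G P) (w : H × H) :
    ‖toLp 2 (P w)‖ ≤ ‖toLp 2 w‖ := by
  have horth : ⟪toLp 2 (P w), toLp 2 (w - P w)⟫_ℂ = 0 :=
    inner_eq_zero_symm.mp ((hP w).2 _ (hP w).1)
  have hpyth := norm_add_sq_eq_norm_sq_add_norm_sq_of_inner_eq_zero _ _ horth
  rw [← toLp_add, add_sub_cancel] at hpyth
  refine (mul_self_le_mul_self_iff (norm_nonneg _) (norm_nonneg _)).mpr ?_
  rw [hpyth]
  exact le_add_of_nonneg_right (mul_self_nonneg _)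

variable {Gn : ℕ → Submodule ℂ (H × H)} {Pn : ℕ → (H × H) →L[ℂ] (H × H)}

lemma tendsto_apply_zero (hPn : ∀ n, IsGraphOrthProj (Gn n) (Pn n)) {u : ℕ → H × H}
    (hu : Tendsto u atTop (𝓝 0)) : Tendsto (fun n => Pn n (u n)) atTop (𝓝 0) := by
  have hu' : Tendsto (fun n => toLp 2 (u n)) atTop (𝓝 0) := by
    simpa [Function.comp_def] using ((prod_continuous_toLp 2 H H).tendsto 0).comp hu
  have hPu : Tendsto (fun n => toLp 2 (Pn n (u n))) atTop (𝓝 0) :=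
    squeeze_zero_norm (fun n => (hPn n).norm_toLp_apply_le (u n)) (tendsto_norm_zero.comp hu')
  simpa [Function.comp_def] using ((prod_continuous_ofLp 2 H H).tendsto 0).comp hPu

lemma tendsto_apply (hPn : ∀ n, IsGraphOrthProj (Gn n) (Pn n)) {w g : H × H}
    {s r : ℕ → H × H} (hs : ∀ n, s n ∈ Gn n)
    (hr : ∀ n, ∀ v ∈ Gn n, ⟪(r n).1, v.1⟫_ℂ + ⟪(r n).2, v.2⟫_ℂ = 0)
    (hsg : Tendsto s atTop (𝓝 g)) (hsrw : Tendsto (fun n => s n + r n) atTop (𝓝 w)) :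
    Tendsto (fun n => Pn n w) atTop (𝓝 g) := by
  have hPsr : ∀ n, Pn n (s n + r n) = s n := fun n =>
    (hPn n).eq_of_mem_of_orthogonal (hs n) (by simpa using hr n)
  have hsplit : ∀ n, Pn n w = s n + Pn n (w - (s n + r n)) := fun n => by
    rw [map_sub, hPsr]
    abel
  have hrest : Tendsto (fun n => Pn n (w - (s n + r n))) atTop (𝓝 0) :=
    tendsto_apply_zero hPn (by simpa using (tendsto_const_nhds (x := w)).sub hsrw)
  simpa only [add_zero, ← hsplit] using hsg.add hrest

lemma subset_strongLimit_of_tendsto (hPn : ∀ n, IsGraphOrthProj (Gn n) (Pn n))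
    (hP : IsGraphOrthProj G P) (h : ∀ w, Tendsto (fun n => Pn n w) atTop (𝓝 (P w))) :
    (G : Set (H × H)) ⊆ strongLimit Gn := fun w hw =>
  ⟨fun n => Pn n w, fun n => (hPn n w).1, by simpa only [hP.apply_eq_self hw] using h w⟩

end IsGraphOrthProj

section StrongGraphLimit

variable {H : Type*} [NormedAddCommGroup H] [InnerProductSpace ℂ H]
  {Tn : ℕ → H →ₗ.[ℂ] H} {T : H →ₗ.[ℂ] H}

lemma graph_subset_strongLimit_of_tendsto_resolvent (hT : T.IsFormalAdjoint T)
    {Rn : ℕ → H → H} (hRn : ∀ n, IsResolventAtI (Tn n) (Rn n)) {R : H → H}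
    (hR : IsResolventAtI T R) (h : ∀ ψ, Tendsto (fun n => Rn n ψ) atTop (𝓝 (R ψ))) :
    (T.graph : Set (H × H)) ⊆ strongLimit fun n => (Tn n).graph := by
  intro x hx
  set ψ := x.2 + I • x.1
  have hRψ : Tendsto (fun n => Rn n ψ) atTop (𝓝 x.1) :=
    hR.apply_snd_add_I_smul_fst hT hx ▸ h ψ
  refine ⟨fun n => (Rn n ψ, ψ - I • Rn n ψ), fun n => (hRn n).mem_graph ψ, ?_⟩
  convert hRψ.prodMk_nhds (tendsto_const_nhds.sub (hRψ.const_smul I))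
  simp [ψ]

lemma tendsto_resolvent_of_graph_subset_strongLimit (hTn : ∀ n, (Tn n).IsFormalAdjoint (Tn n))
    {Rn : ℕ → H → H} (hRn : ∀ n, IsResolventAtI (Tn n) (Rn n)) {R : H → H}
    (hR : IsResolventAtI T R) (h : (T.graph : Set (H × H)) ⊆ strongLimit fun n => (Tn n).graph)
    (ψ : H) : Tendsto (fun n => Rn n ψ) atTop (𝓝 (R ψ)) := by
  obtain ⟨s, hs, hslim⟩ := h (hR.mem_graph ψ)
  have hsψ : Tendsto (fun n => ψ - ((s n).2 + I • (s n).1)) atTop (𝓝 0) := by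
    simpa using (tendsto_const_nhds (x := ψ)).sub (hslim.snd_nhds.add (hslim.fst_nhds.const_smul I))
  have hdiff : Tendsto (fun n => Rn n ψ - (s n).1) atTop (𝓝 0) :=
    squeeze_zero_norm (fun n => (hRn n).norm_sub_fst_le (hTn n) ψ (hs n)) (tendsto_norm_zero.comp hsψ)
  simpa using hdiff.add hslim.fst_nhds

variable [CompleteSpace H]

lemma strongLimit_subset_graph (hTn : ∀ n, (Tn n).IsFormalAdjoint (Tn n)) (hT : IsSelfAdjoint T)
    (h : (T.graph : Set (H × H)) ⊆ strongLimit fun n => (Tn n).graph) :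
    strongLimit (fun n => (Tn n).graph) ⊆ T.graph := by
  rintro x ⟨u, hu, hux⟩
  refine hT.mem_graph_iff.mpr fun v hv => ?_
  obtain ⟨s, hs, hsv⟩ := h hv
  have hlim₁ : Tendsto (fun n => ⟪(s n).2, (u n).1⟫_ℂ) atTop (𝓝 ⟪v.2, x.1⟫_ℂ) :=
    hsv.snd_nhds.inner hux.fst_nhds
  have hlim₂ : Tendsto (fun n => ⟪(s n).1, (u n).2⟫_ℂ) atTop (𝓝 ⟪v.1, x.2⟫_ℂ) :=
    hsv.fst_nhds.inner hux.snd_nhds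
  exact tendsto_nhds_unique
    (hlim₁.congr fun n => (hTn n).inner_snd_fst_of_mem_graph (hs n) (hu n)) hlim₂

lemma tendsto_graphOrthProj_of_graph_subset_strongLimit
    (hTn : ∀ n, (Tn n).IsFormalAdjoint (Tn n)) (hT : IsSelfAdjoint T)
    {Qn : ℕ → (H × H) →L[ℂ] (H × H)} (hQn : ∀ n, IsGraphOrthProj (Tn n).graph (Qn n))
    {Q : (H × H) →L[ℂ] (H × H)} (hQ : IsGraphOrthProj T.graph Q)
    (h : (T.graph : Set (H × H)) ⊆ strongLimit fun n => (Tn n).graph) (w : H × H) :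
    Tendsto (fun n => Qn n w) atTop (𝓝 (Q w)) := by
  obtain ⟨s, hs, hslim⟩ := h (hQ w).1
  obtain ⟨t, ht, htlim⟩ := h (hT.mem_graph_of_orthogonal (hQ w).2)
  refine IsGraphOrthProj.tendsto_apply hQn (r := fun n => (-(t n).2, (t n).1)) hs
    (fun n v hv => ?_) hslim ?_
  · simp [inner_neg_left, (hTn n).inner_snd_fst_of_mem_graph (ht n) hv]
  · convert hslim.add (htlim.snd_nhds.neg.prodMk_nhds htlim.fst_nhds)
    ext <;> simp

end StrongGraphLimit

theorem stmt11 {H : Type*} [NormedAddCommGroup H] [InnerProductSpace ℂ H] [CompleteSpace H]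
    (Bn : ℕ → (H →ₗ.[ℂ] H)) (hBn : ∀ n, IsSelfAdjoint (Bn n))
    (B : H →ₗ.[ℂ] H) (hB : IsSelfAdjoint B)
    (Rn : ℕ → H → H) (hRn : ∀ n, IsResolventAtI (Bn n) (Rn n))
    (R : H → H) (hR : IsResolventAtI B R)
    (Qn : ℕ → ((H × H) →L[ℂ] (H × H))) (hQn : ∀ n, IsGraphOrthProj (Bn n).graph (Qn n))
    (Q : (H × H) →L[ℂ] (H × H)) (hQ : IsGraphOrthProj B.graph Q) :
    List.TFAE
      [ ∀ ψ : H, Tendsto (fun n => Rn n ψ) atTop (𝓝 (R ψ)),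
        (B.graph : Set (H × H)) = strongLimit (fun n => (Bn n).graph),
        (B.graph : Set (H × H)) ⊆ strongLimit (fun n => (Bn n).graph),
        ∀ w : H × H, Tendsto (fun n => Qn n w) atTop (𝓝 (Q w)) ] := by
  have hBn' : ∀ n, (Bn n).IsFormalAdjoint (Bn n) := fun n => (hBn n).isFormalAdjoint
  tfae_have 1 → 3 := graph_subset_strongLimit_of_tendsto_resolvent hB.isFormalAdjoint hRn hR
  tfae_have 3 → 1 := tendsto_resolvent_of_graph_subset_strongLimit hBn' hRn hR
  tfae_have 3 → 2 := fun h => h.antisymm (strongLimit_subset_graph hBn' hB h)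
  tfae_have 2 → 3 := fun h => h.subset
  tfae_have 3 → 4 := tendsto_graphOrthProj_of_graph_subset_strongLimit hBn' hB hQn hQ
  tfae_have 4 → 3 := IsGraphOrthProj.subset_strongLimit_of_tendsto hQn hQ
  tfae_finish
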